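/- Let E = ℝ^d with the Euclidean norm ‖·‖_2, let W ⊆ ℝ^d be nonempty compact convex with diameter D, let f_1,…,f_T : W → ℝ be convex functions, let w_1,…,w_T ∈ W, and let g_t be a subgradient of f_t at w_t for each t. Let P be the passed rounds of the Top-k Filter with parameter k applied to g_1,…,g_T. Suppose the predictions satisfy the adaptive online gradient descent guarantee on the passed rounds: for every u ∈ W, Σ_{t∈P} ⟨w_t − u, g_t⟩ ≤ 2D·√(Σ_{t∈P} ‖g_t‖_2²). Then for every S ⊆ [T] with T − |S| ≤ k and every u ∈ W, the robust regret satisfies Σ_{t∈S} (f_t(w_t) − f_t(u)) ≤ 2D·√(Σ_{t∈S} ‖g_t‖_2²) + 2D·G(S)·(2k + √k + 2) ≤ 2D·G(S)·(√T + 2k + √k + 2). -/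

import Mathlib

/-!
By the subgradient inequality the regret on `S` is at most `∑_{t ∈ S} ⟨w_t - u, g_t⟩`. This
differs from the same sum over the passed rounds `P`, which the OGD guarantee controls, only on
the passed outliers `P \ S` and the rejected inliers `S \ P`, where each term is at most
`D ‖g_t‖` in absolute value. There are at most `k` passed outliers, each with
`‖g_t‖ ≤ 2 m_t ≤ 2 G(S)`. A rejected round has norm above `2 m_t`, so among any `k + 1` rejected
rounds the latest has more than twice the smallest norm; hence the rejected norms sum to at most
twice the `k` largest of them. Finally, the threshold `m_t` of each passed outlier `t` can be
charged to a distinct round of `S` of norm at least `m_t`, so `∑_{P \ S} m_t² ≤ ∑_S ‖g_t‖²`;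
together with `‖g_t‖ ≤ 2 m_t` on `P` this bounds how far `√(∑_P ‖g_t‖²)` can exceed
`√(∑_S ‖g_t‖²)`.
-/

/-- The `(k+1)`-th largest element of a list of reals (`0` if the list has fewer
than `k+1` elements). -/
noncomputable def kthLargest (k : ℕ) (l : List ℝ) : ℝ :=
  (l.mergeSort (fun a b => decide (b ≤ a))).getD k 0

/-- `m_t`: the `(k+1)`-th largest value among `‖g 0‖₂, …, ‖g t‖₂`. -/
noncomputable def topkThresh {d : ℕ} (g : ℕ → EuclideanSpace ℝ (Fin d)) (k t : ℕ) : ℝ :=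
  kthLargest k ((List.range (t + 1)).map fun s => ‖g s‖)

/-- The set of rounds in `{0, …, T-1}` passed on to ALG by the Top-k Filter. -/
noncomputable def topkPassed {d : ℕ} (g : ℕ → EuclideanSpace ℝ (Fin d)) (k T : ℕ) :
    Finset ℕ :=
  (Finset.range T).filter fun t => ‖g t‖ ≤ 2 * topkThresh g k t

/-- `G(S) = max_{t ∈ S} ‖g t‖₂` (with `G(∅) = 0`). -/
noncomputable def gradMax {d : ℕ} (g : ℕ → EuclideanSpace ℝ (Fin d)) (S : Finset ℕ) : ℝ :=
  ((S.sup fun t => ‖g t‖₊ : NNReal) : ℝ)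

open Finset

section KthLargest

variable (k : ℕ) (l : List ℝ)

theorem List.Pairwise.countP_getElem_le_and_countP_getElem_lt {s : List ℝ}
    (hs : s.Pairwise (· ≥ ·)) (hk : k < s.length) :
    k + 1 ≤ s.countP (fun x => s[k] ≤ x) ∧ s.countP (fun x => s[k] < x) ≤ k := by
  have hsplit : s = s.take k ++ s[k] :: s.drop (k + 1) := by
    rw [← List.drop_eq_getElem_cons, List.take_append_drop]
  have hhead : ∀ a ∈ s.take k, s[k] ≤ a := by
    rw [hsplit, List.pairwise_append] at hs
    exact fun a ha => hs.2.2 a ha _ List.mem_cons_self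
  have htail : ∀ b ∈ s.drop (k + 1), b ≤ s[k] := by
    rw [hsplit, List.pairwise_append, List.pairwise_cons] at hs
    exact hs.2.1.1
  have htake : (s.take k).length = k := List.length_take_of_le hk.le
  generalize s[k] = x at hsplit hhead htail ⊢
  rw [hsplit, List.countP_append, List.countP_append, List.countP_cons, List.countP_cons]
  constructor
  · rw [List.countP_eq_length.2 (by simpa using hhead)]
    simp [htake]
  · have hzero : (s.drop (k + 1)).countP (fun y => x < y) = 0 :=
      List.countP_eq_zero.2 (by simpa using htail)
    have := List.countP_le_length (p := fun y => x < y) (l := s.take k)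
    simp only [hzero, lt_irrefl, decide_false, Bool.false_eq_true, if_false]
    omega

theorem kthLargest_of_length_le (hk : l.length ≤ k) : kthLargest k l = 0 :=
  List.getD_eq_default _ _ (by rwa [List.length_mergeSort])

theorem kthLargest_nonneg (h : ∀ x ∈ l, 0 ≤ x) : 0 ≤ kthLargest k l := by
  rw [kthLargest, List.getD_eq_getElem?_getD]
  cases hx : (l.mergeSort fun a b => decide (b ≤ a))[k]? with
  | none => rfl
  | some x => exact h x ((List.mergeSort_perm l _).mem_iff.1 (List.mem_of_getElem? hx))

theorem countP_kthLargest_le_and_countP_kthLargest_lt (hk : k < l.length) :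
    k + 1 ≤ l.countP (fun x => kthLargest k l ≤ x) ∧
      l.countP (fun x => kthLargest k l < x) ≤ k := by
  have hs : k < (l.mergeSort fun a b => decide (b ≤ a)).length := by
    rwa [List.length_mergeSort]
  rw [← (List.mergeSort_perm l _).countP_eq, ← (List.mergeSort_perm l _).countP_eq, kthLargest,
    List.getD_eq_getElem _ _ hs]
  exact (List.pairwise_mergeSort' _ l).countP_getElem_le_and_countP_getElem_lt k hs

theorem kthLargest_le {c : ℝ} (hc : 0 ≤ c) (h : l.countP (fun x => c < x) ≤ k) :
    kthLargest k l ≤ c := by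
  by_contra! hlt
  have hk : k < l.length := by
    by_contra! hk
    rw [kthLargest_of_length_le k l hk] at hlt
    linarith
  have hmono : l.countP (fun x => kthLargest k l ≤ x) ≤ l.countP (fun x => c < x) :=
    List.countP_mono_left fun x _ hx => by simp only [decide_eq_true_eq] at hx ⊢; linarith
  have := (countP_kthLargest_le_and_countP_kthLargest_lt k l hk).1
  omega

theorem le_kthLargest {c : ℝ} (h : k + 1 ≤ l.countP (fun x => c ≤ x)) :
    c ≤ kthLargest k l := by
  by_contra! hlt
  have hk : k < l.length := Nat.lt_of_succ_le (h.trans List.countP_le_length)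
  have hmono : l.countP (fun x => c ≤ x) ≤ l.countP (fun x => kthLargest k l < x) :=
    List.countP_mono_left fun x _ hx => by simp only [decide_eq_true_eq] at hx ⊢; linarith
  have := (countP_kthLargest_le_and_countP_kthLargest_lt k l hk).2
  omega

end KthLargest

theorem List.countP_map_range (n : ℕ) (v : ℕ → ℝ) (p : ℝ → Prop) [DecidablePred p] :
    ((List.range n).map v).countP (fun x => p x) = #{t ∈ Finset.range n | p (v t)} := by
  rw [List.countP_map, Finset.card_def, Finset.filter_val, ← Multiset.countP_eq_card_filter,
    Finset.range_val, Multiset.range, Multiset.coe_countP]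
  rfl

section TopkThresh

variable {d : ℕ} (g : ℕ → EuclideanSpace ℝ (Fin d)) (k : ℕ) {t : ℕ}

theorem topkThresh_nonneg (t : ℕ) : 0 ≤ topkThresh g k t :=
  kthLargest_nonneg _ _ fun x hx => by
    obtain ⟨s, -, rfl⟩ := List.mem_map.1 hx
    exact norm_nonneg _

theorem topkThresh_le {c : ℝ} (hc : 0 ≤ c) (h : #{u ∈ range (t + 1) | c < ‖g u‖} ≤ k) :
    topkThresh g k t ≤ c :=
  kthLargest_le _ _ hc (by rwa [List.countP_map_range _ _ (fun x => c < x)])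

theorem le_topkThresh {c : ℝ} {B : Finset ℕ} (hBt : ∀ u ∈ B, u ≤ t) (hB : k + 1 ≤ #B)
    (hc : ∀ u ∈ B, c ≤ ‖g u‖) : c ≤ topkThresh g k t := by
  refine le_kthLargest _ _ ?_
  rw [List.countP_map_range _ _ (fun x => c ≤ x)]
  refine hB.trans (card_le_card fun u hu => ?_)
  rw [mem_filter, mem_range]
  exact ⟨Nat.lt_succ_of_le (hBt u hu), hc u hu⟩

theorem add_one_le_card_topkThresh_le (h : 0 < topkThresh g k t) :
    k + 1 ≤ #{u ∈ range (t + 1) | topkThresh g k t ≤ ‖g u‖} := by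
  have hk : k < ((List.range (t + 1)).map fun s => ‖g s‖).length := by
    by_contra! hk
    rw [topkThresh, kthLargest_of_length_le _ _ hk] at h
    exact lt_irrefl _ h
  have := (countP_kthLargest_le_and_countP_kthLargest_lt _ _ hk).1
  rwa [List.countP_map_range _ _ (fun x => kthLargest k _ ≤ x)] at this

end TopkThresh

section Combinatorics

variable {ι κ : Type*} [LinearOrder ι]

/-- A greedy matching from the latest element backwards: each `t ∈ F` is charged to a distinct
`u ∈ S` with `μ t ≤ v u`. -/
theorem sum_le_sum_of_card_filter_le_card_filter (F : Finset ι) (S : Finset κ) (μ : ι → ℝ)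
    (v : κ → ℝ) (hv : ∀ u ∈ S, 0 ≤ v u)
    (h : ∀ t ∈ F, 0 < μ t → #{t' ∈ F | t ≤ t'} ≤ #{u ∈ S | μ t ≤ v u}) :
    ∑ t ∈ F, μ t ≤ ∑ u ∈ S, v u := by
  classical
  induction F using Finset.induction_on_max generalizing S with
  | empty => simpa using sum_nonneg hv
  | insert a F ha ih =>
    have haF : a ∉ F := fun h => lt_irrefl a (ha a h)
    have hfilter : ∀ t ∈ F, {t' ∈ insert a F | t ≤ t'} = insert a {t' ∈ F | t ≤ t'} :=
      fun t ht => by rw [filter_insert, if_pos (ha t ht).le]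
    rw [sum_insert haF]
    by_cases hμa : μ a ≤ 0
    · have := ih S hv fun t ht hμt => by
        refine le_trans ?_ (h t (mem_insert_of_mem ht) hμt)
        rw [hfilter t ht]
        exact card_le_card (subset_insert _ _)
      linarith
    · rw [not_le] at hμa
      obtain ⟨u, hu⟩ : ({u ∈ S | μ a ≤ v u}).Nonempty := by
        refine card_pos.1 (lt_of_lt_of_le (card_pos.2 ⟨a, ?_⟩) (h a (mem_insert_self a F) hμa))
        simp
      rw [mem_filter] at hu
      have := ih (S.erase u) (fun u' hu' => hv u' (mem_of_mem_erase hu')) fun t ht hμt => by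
        have hle := h t (mem_insert_of_mem ht) hμt
        rw [hfilter t ht, card_insert_of_notMem (fun h => haF (mem_filter.1 h).1)] at hle
        rw [filter_erase]
        have := pred_card_le_card_erase (s := {u ∈ S | μ t ≤ v u}) (a := u)
        omega
      rw [← add_sum_erase S v hu.1]
      linarith

theorem exists_subset_card_le_and_sum_le_two_mul_sum (R : Finset ι) (v : ι → ℝ) (k : ℕ)
    (hv : ∀ t ∈ R, 0 ≤ v t)
    (h : ∀ a ∈ R, ∀ B ⊆ R, (∀ b ∈ B, b ≤ a) → k + 1 ≤ #B → ∀ c, (∀ b ∈ B, c ≤ v b) →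
      2 * c < v a) :
    ∃ A ⊆ R, #A ≤ k ∧ ∑ t ∈ R, v t ≤ 2 * ∑ t ∈ A, v t := by
  classical
  induction R using Finset.induction_on_max with
  | empty => exact ⟨∅, by simp⟩
  | insert a R ha ih =>
    have haR : a ∉ R := fun h => lt_irrefl a (ha a h)
    have hva := hv a (mem_insert_self a R)
    obtain ⟨A, hAR, hAk, hsum⟩ := ih (fun t ht => hv t (mem_insert_of_mem ht))
      fun b hb B hB => h b (mem_insert_of_mem hb) B (hB.trans (subset_insert a R))
    have haA : a ∉ A := fun h => haR (hAR h)
    rw [sum_insert haR]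
    rcases hAk.lt_or_eq with hlt | heq
    · refine ⟨insert a A, insert_subset_insert a hAR, (card_insert_le a A).trans hlt, ?_⟩
      rw [sum_insert haA]
      linarith
    -- `A` is full: trade its minimum `b` for `a`, which is worth at least twice as much.
    obtain ⟨b, hbB, hb⟩ := exists_mem_eq_inf' (insert_nonempty a A) v
    have hhalf := h a (mem_insert_self a R) (insert a A) (insert_subset_insert a hAR)
      (fun b hb => (mem_insert.1 hb).elim le_of_eq fun hbA => (ha b (hAR hbA)).le)
      (by rw [card_insert_of_notMem haA, heq]) ((insert a A).inf' (insert_nonempty a A) v)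
      fun b hb => inf'_le v hb
    rw [hb] at hhalf
    rcases mem_insert.1 hbB with rfl | hbA
    · linarith
    refine ⟨insert a (A.erase b), insert_subset_insert a ((erase_subset b A).trans hAR), ?_,
      ?_⟩
    · have := card_erase_of_mem hbA
      have := card_insert_le a (A.erase b)
      have := card_pos.2 ⟨b, hbA⟩
      omega
    · rw [sum_insert fun h => haA (mem_of_mem_erase h), ← add_sum_erase A v hbA] at *
      linarith

end Combinatorics

section SqrtInequalities

theorem sqrt_add_le_sqrt_add_add_two_mul_sqrt_sub {x r Q s p : ℝ} (hp : 0 ≤ p)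
    (hpr : p ^ 2 ≤ r) (hps : p ^ 2 ≤ s) (hQ : Q ≤ 4 * s) (hs : s ≤ x + r) :
    √(x + Q) ≤ √(x + r) + 2 * √s - p := by
  have hs0 : 0 ≤ s := (sq_nonneg p).trans hps
  have hpq : p ≤ √s := (Real.le_sqrt hp hs0).2 hps
  have hqa : √s ≤ √(x + r) := Real.sqrt_le_sqrt hs
  have hq2 := Real.sq_sqrt hs0
  have ha2 := Real.sq_sqrt (hs0.trans hs)
  rw [Real.sqrt_le_left (by linarith [Real.sqrt_nonneg s])]
  nlinarith [mul_le_mul_of_nonneg_right hqa (by linarith : 0 ≤ 2 * √s - p),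
    mul_nonneg (sub_nonneg.2 hpq) (by linarith : 0 ≤ 2 * √s - p)]

theorem two_mul_sqrt_add_add_le {k : ℕ} {G X Y x Q r s : ℝ} (hG : 0 ≤ G) (hr : 0 ≤ r)
    (hs0 : 0 ≤ s) (hX : X ≤ 2 * k * G) (hY : Y ≤ 2 * k * G) (hY2 : Y ^ 2 ≤ 4 * k * r)
    (hQ : Q ≤ 4 * s) (hsk : s ≤ k * G ^ 2) (hs : s ≤ x + r) :
    2 * √(x + Q) + X + Y ≤ 2 * √(x + r) + 2 * G * (2 * k + √k) := by
  have hk0 : (0 : ℝ) ≤ k := Nat.cast_nonneg k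
  have hsG : √s ≤ √k * G := by
    calc √s ≤ √(k * G ^ 2) := Real.sqrt_le_sqrt hsk
      _ = √k * G := by rw [Real.sqrt_mul hk0, Real.sqrt_sq hG]
  have hksG : √k * √s ≤ k * G := by
    calc √k * √s ≤ √k * (√k * G) := mul_le_mul_of_nonneg_left hsG (Real.sqrt_nonneg k)
      _ = k * G := by rw [← mul_assoc, Real.mul_self_sqrt hk0]
  rcases le_total r s with hrs | hsr
  · have hgap := sqrt_add_le_sqrt_add_add_two_mul_sqrt_sub (Real.sqrt_nonneg r)
      (Real.sq_sqrt hr).le (by rwa [Real.sq_sqrt hr]) hQ hs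
    have hYr : Y ≤ 2 * (√k * √r) := by
      refine le_of_sq_le_sq ?_ (by positivity)
      rw [mul_pow, mul_pow, Real.sq_sqrt hk0, Real.sq_sqrt hr]
      linarith
    have htrade : 0 ≤ (√k - 1) * (√s - √r) := by
      have hrs' : √r ≤ √s := Real.sqrt_le_sqrt hrs
      rcases Nat.eq_zero_or_pos k with rfl | hk
      · have hs : √s = 0 := le_antisymm (by simpa using hsG) (Real.sqrt_nonneg s)
        have hr : √r = 0 := le_antisymm (hs ▸ hrs') (Real.sqrt_nonneg r)
        simp [hs, hr]
      · have : 1 ≤ √k := Real.one_le_sqrt.2 (by exact_mod_cast hk)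
        exact mul_nonneg (by linarith) (by linarith)
    linarith
  · have hgap := sqrt_add_le_sqrt_add_add_two_mul_sqrt_sub (Real.sqrt_nonneg s)
      (by rwa [Real.sq_sqrt hs0]) (Real.sq_sqrt hs0).le hQ hs
    linarith [Real.sqrt_nonneg k]

end SqrtInequalities

section GradMax

variable {d : ℕ} (g : ℕ → EuclideanSpace ℝ (Fin d))

theorem gradMax_nonneg (S : Finset ℕ) : 0 ≤ gradMax g S := NNReal.coe_nonneg _

theorem norm_le_gradMax {S : Finset ℕ} {t : ℕ} (ht : t ∈ S) : ‖g t‖ ≤ gradMax g S := by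
  rw [gradMax, ← coe_nnnorm]
  exact NNReal.coe_le_coe.2 (le_sup (f := fun t => ‖g t‖₊) ht)

end GradMax

section TopkFilter

variable {d : ℕ} (g : ℕ → EuclideanSpace ℝ (Fin d)) (k T : ℕ) {S : Finset ℕ}

theorem sqrt_sum_sq_norm_le (hS : S ⊆ range T) :
    √(∑ t ∈ S, ‖g t‖ ^ 2) ≤ √T * gradMax g S := by
  have hsum : ∑ t ∈ S, ‖g t‖ ^ 2 ≤ T * gradMax g S ^ 2 := by
    calc ∑ t ∈ S, ‖g t‖ ^ 2 ≤ #S • gradMax g S ^ 2 :=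
          sum_le_card_nsmul _ _ _ fun t ht =>
            pow_le_pow_left₀ (norm_nonneg _) (norm_le_gradMax g ht) 2
      _ ≤ T * gradMax g S ^ 2 := by
          rw [nsmul_eq_mul]
          gcongr
          simpa using card_le_card hS
  calc √(∑ t ∈ S, ‖g t‖ ^ 2) ≤ √(T * gradMax g S ^ 2) := Real.sqrt_le_sqrt hsum
    _ = √T * gradMax g S := by
        rw [Real.sqrt_mul (Nat.cast_nonneg T), Real.sqrt_sq (gradMax_nonneg g S)]

theorem topkThresh_le_gradMax (hout : #(range T \ S) ≤ k) {t : ℕ} (ht : t < T) :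
    topkThresh g k t ≤ gradMax g S := by
  refine topkThresh_le g k (gradMax_nonneg g S) ((card_le_card fun u hu => ?_).trans hout)
  rw [mem_filter, mem_range] at hu
  exact mem_sdiff.2 ⟨mem_range.2 (by omega), fun huS => (norm_le_gradMax g huS).not_gt hu.2⟩

theorem card_topkPassed_sdiff_le (hout : #(range T \ S) ≤ k) : #(topkPassed g k T \ S) ≤ k :=
  (card_le_card (sdiff_subset_sdiff (filter_subset _ _) le_rfl)).trans hout

theorem sum_norm_topkPassed_sdiff_le (hout : #(range T \ S) ≤ k) :
    ∑ t ∈ topkPassed g k T \ S, ‖g t‖ ≤ 2 * k * gradMax g S := by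
  calc ∑ t ∈ topkPassed g k T \ S, ‖g t‖
        ≤ #(topkPassed g k T \ S) • (2 * gradMax g S) := by
        refine sum_le_card_nsmul _ _ _ fun t ht => ?_
        obtain ⟨htT, hpass⟩ := mem_filter.1 (mem_sdiff.1 ht).1
        linarith [topkThresh_le_gradMax g k T hout (mem_range.1 htT)]
    _ ≤ 2 * k * gradMax g S := by
        have hcard : (#(topkPassed g k T \ S) : ℝ) ≤ k := by
          exact_mod_cast card_topkPassed_sdiff_le g k T hout
        rw [nsmul_eq_mul]
        nlinarith [gradMax_nonneg g S]

theorem sum_sq_norm_le_four_mul_sum_sq_topkThresh {A : Finset ℕ} (hA : A ⊆ topkPassed g k T) :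
    ∑ t ∈ A, ‖g t‖ ^ 2 ≤ 4 * ∑ t ∈ A, topkThresh g k t ^ 2 := by
  rw [mul_sum]
  refine sum_le_sum fun t ht => ?_
  have := (mem_filter.1 (hA ht)).2
  nlinarith [norm_nonneg (g t)]

theorem sum_sq_topkThresh_le_card_mul (hout : #(range T \ S) ≤ k) :
    ∑ t ∈ topkPassed g k T \ S, topkThresh g k t ^ 2 ≤ k * gradMax g S ^ 2 := by
  calc ∑ t ∈ topkPassed g k T \ S, topkThresh g k t ^ 2
        ≤ #(topkPassed g k T \ S) • gradMax g S ^ 2 := by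
        refine sum_le_card_nsmul _ _ _ fun t ht => ?_
        have htT := mem_range.1 (mem_filter.1 (mem_sdiff.1 ht).1).1
        exact pow_le_pow_left₀ (topkThresh_nonneg g k t)
          (topkThresh_le_gradMax g k T hout htT) 2
    _ ≤ k * gradMax g S ^ 2 := by
        rw [nsmul_eq_mul]
        gcongr
        exact_mod_cast card_topkPassed_sdiff_le g k T hout

/-- Each passed outlier `t` is charged to a round of `S` up to time `t` whose gradient is at least
`m_t`: of the `k + 1` rounds witnessing `m_t`, the outliers among them and the passed outliers
from time `t` on are at most `k + 1` in total. -/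
theorem sum_sq_topkThresh_le_sum_sq_norm (hout : #(range T \ S) ≤ k) :
    ∑ t ∈ topkPassed g k T \ S, topkThresh g k t ^ 2 ≤ ∑ u ∈ S, ‖g u‖ ^ 2 := by
  refine sum_le_sum_of_card_filter_le_card_filter _ _ _ _ (fun _ _ => sq_nonneg _)
    fun t ht hpos => ?_
  have hm : 0 < topkThresh g k t :=
    (topkThresh_nonneg g k t).lt_of_ne (sq_pos_iff.1 hpos).symm
  set O := range T \ S
  set A := {u ∈ range (t + 1) | topkThresh g k t ≤ ‖g u‖}
  have hA : k + 1 ≤ #A := add_one_le_card_topkThresh_le g k hm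
  have htO : t ∈ O := sdiff_subset_sdiff (filter_subset _ _) le_rfl ht
  have hlate : #{t' ∈ topkPassed g k T \ S | t ≤ t'} ≤ #{u ∈ O | t ≤ u} :=
    card_le_card (filter_subset_filter _ (sdiff_subset_sdiff (filter_subset _ _) le_rfl))
  have hearly : #(A \ S) ≤ #{u ∈ O | ¬ t ≤ u} + 1 := by
    refine (card_le_card fun u hu => ?_).trans (card_insert_le t _)
    obtain ⟨hu, huS⟩ := mem_sdiff.1 hu
    obtain ⟨hut, -⟩ := mem_filter.1 hu
    rw [mem_range] at hut
    rcases (Nat.lt_succ_iff.1 hut).eq_or_lt with rfl | hlt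
    · exact mem_insert_self _ _
    · refine mem_insert_of_mem (mem_filter.2 ⟨mem_sdiff.2 ⟨mem_range.2 ?_, huS⟩, by omega⟩)
      exact hlt.trans (mem_range.1 (mem_sdiff.1 htO).1)
  have hsplitO := card_filter_add_card_filter_not (s := O) (t ≤ ·)
  have hsplitA := card_inter_add_card_sdiff A S
  have hAS : #(A ∩ S) ≤ #{u ∈ S | topkThresh g k t ^ 2 ≤ ‖g u‖ ^ 2} := by
    refine card_le_card fun u hu => ?_
    obtain ⟨huA, huS⟩ := mem_inter.1 hu
    exact mem_filter.2 ⟨huS, pow_le_pow_left₀ hm.le (mem_filter.1 huA).2 2⟩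
  omega

theorem sum_norm_sdiff_topkPassed_le (hS : S ⊆ range T) :
    ∑ t ∈ S \ topkPassed g k T, ‖g t‖ ≤ 2 * k * gradMax g S ∧
      (∑ t ∈ S \ topkPassed g k T, ‖g t‖) ^ 2 ≤
        4 * k * ∑ t ∈ S \ topkPassed g k T, ‖g t‖ ^ 2 := by
  set R := S \ topkPassed g k T
  have hrejected : ∀ a ∈ R, 2 * topkThresh g k a < ‖g a‖ := fun a ha => by
    obtain ⟨haS, hpass⟩ := mem_sdiff.1 ha
    exact lt_of_not_ge fun h => hpass (mem_filter.2 ⟨hS haS, h⟩)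
  obtain ⟨A, hAR, hAk, hsum⟩ := exists_subset_card_le_and_sum_le_two_mul_sum R (‖g ·‖) k
    (fun _ _ => norm_nonneg _) fun a ha B _ hBa hB c hc =>
      (mul_le_mul_of_nonneg_left (le_topkThresh g k hBa hB hc) zero_le_two).trans_lt
        (hrejected a ha)
  have hAG : ∑ t ∈ A, ‖g t‖ ≤ k * gradMax g S := by
    calc ∑ t ∈ A, ‖g t‖ ≤ #A • gradMax g S :=
          sum_le_card_nsmul _ _ _ fun t ht => norm_le_gradMax g (mem_sdiff.1 (hAR ht)).1
      _ ≤ k * gradMax g S := by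
          rw [nsmul_eq_mul]
          gcongr
          exact gradMax_nonneg g S
  have hA2 : (∑ t ∈ A, ‖g t‖) ^ 2 ≤ k * ∑ t ∈ R, ‖g t‖ ^ 2 :=
    sq_sum_le_card_mul_sum_sq.trans (mul_le_mul (by exact_mod_cast hAk)
      (sum_le_sum_of_subset_of_nonneg hAR fun _ _ _ => sq_nonneg _)
      (sum_nonneg fun _ _ => sq_nonneg _) (Nat.cast_nonneg k))
  refine ⟨by linarith, ?_⟩
  calc (∑ t ∈ R, ‖g t‖) ^ 2 ≤ (2 * ∑ t ∈ A, ‖g t‖) ^ 2 :=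
        pow_le_pow_left₀ (sum_nonneg fun _ _ => norm_nonneg _) hsum 2
    _ ≤ 4 * k * ∑ t ∈ R, ‖g t‖ ^ 2 := by nlinarith

theorem two_mul_sqrt_sum_sq_topkPassed_add_le (hS : S ⊆ range T) (hout : #(range T \ S) ≤ k) :
    2 * √(∑ t ∈ topkPassed g k T, ‖g t‖ ^ 2) + ∑ t ∈ topkPassed g k T \ S, ‖g t‖ +
        ∑ t ∈ S \ topkPassed g k T, ‖g t‖ ≤
      2 * √(∑ t ∈ S, ‖g t‖ ^ 2) + 2 * gradMax g S * (2 * k + √k) := by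
  set P := topkPassed g k T
  obtain ⟨hY, hY2⟩ := sum_norm_sdiff_topkPassed_le g k T hS
  have hsS := sum_sq_topkThresh_le_sum_sq_norm g k T hout
  rw [← sum_inter_add_sum_sdiff P S, inter_comm, ← sum_inter_add_sum_sdiff S P] at *
  exact two_mul_sqrt_add_add_le (gradMax_nonneg g S) (sum_nonneg fun _ _ => sq_nonneg _)
    (sum_nonneg fun _ _ => sq_nonneg _) (sum_norm_topkPassed_sdiff_le g k T hout) hY hY2
    (sum_sq_norm_le_four_mul_sum_sq_topkThresh g k T sdiff_subset)
    (sum_sq_topkThresh_le_card_mul g k T hout) hsS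

end TopkFilter

theorem abs_inner_sub_le_diam_mul_norm {E : Type*} [NormedAddCommGroup E]
    [InnerProductSpace ℝ E] {W : Set E} (hW : Bornology.IsBounded W) {w u : E} (hw : w ∈ W)
    (hu : u ∈ W) (g : E) :
    |inner ℝ (w - u) g| ≤ Metric.diam W * ‖g‖ := by
  refine (abs_real_inner_le_norm _ _).trans (mul_le_mul_of_nonneg_right ?_ (norm_nonneg g))
  rw [← dist_eq_norm]
  exact Metric.dist_le_diam_of_mem hW hw hu

theorem sum_le_sum_add_sum_sdiff_add_sum_sdiff {ι : Type*} [DecidableEq ι] (P S : Finset ι)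
    (φ c : ι → ℝ) (hP : ∀ t ∈ P \ S, |φ t| ≤ c t) (hS : ∀ t ∈ S \ P, |φ t| ≤ c t) :
    ∑ t ∈ S, φ t ≤ ∑ t ∈ P, φ t + ∑ t ∈ P \ S, c t + ∑ t ∈ S \ P, c t := by
  rw [← sum_inter_add_sum_sdiff S P, ← sum_inter_add_sum_sdiff P S, inter_comm]
  have hPS := sum_le_sum fun t ht => neg_le_of_abs_le (hP t ht)
  have hSP := sum_le_sum fun t ht => le_of_abs_le (hS t ht)
  rw [sum_neg_distrib] at hPS
  linarith

theorem topk_filter_general_convex_general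
    {d : ℕ} (W : Set (EuclideanSpace ℝ (Fin d)))
    (hWcomp : IsCompact W)
    (D : ℝ) (hD : D = Metric.diam W)
    (T k : ℕ)
    (f : ℕ → EuclideanSpace ℝ (Fin d) → ℝ)
    (w : ℕ → EuclideanSpace ℝ (Fin d)) (hw : ∀ t ∈ Finset.range T, w t ∈ W)
    (g : ℕ → EuclideanSpace ℝ (Fin d))
    (hsub : ∀ t ∈ Finset.range T, ∀ y ∈ W, f t (w t) + (inner ℝ (y - w t) (g t) : ℝ) ≤ f t y)
    (hOGD : ∀ u ∈ W, ∑ t ∈ topkPassed g k T, (inner ℝ (w t - u) (g t) : ℝ) ≤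
      2 * D * Real.sqrt (∑ t ∈ topkPassed g k T, ‖g t‖ ^ 2))
    (S : Finset ℕ) (hS : S ⊆ Finset.range T) (hSk : T - S.card ≤ k)
    (u : EuclideanSpace ℝ (Fin d)) (hu : u ∈ W) :
    ∑ t ∈ S, (f t (w t) - f t u) ≤
        2 * D * Real.sqrt (∑ t ∈ S, ‖g t‖ ^ 2)
          + 2 * D * gradMax g S * (2 * k + Real.sqrt k + 2) ∧
      2 * D * Real.sqrt (∑ t ∈ S, ‖g t‖ ^ 2)
          + 2 * D * gradMax g S * (2 * k + Real.sqrt k + 2) ≤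
        2 * D * gradMax g S * (Real.sqrt T + 2 * k + Real.sqrt k + 2) := by
  have hD0 : 0 ≤ D := hD ▸ Metric.diam_nonneg
  have hDG : 0 ≤ D * gradMax g S := mul_nonneg hD0 (gradMax_nonneg g S)
  have hinner : ∀ t ∈ range T, |inner ℝ (w t - u) (g t)| ≤ D * ‖g t‖ := fun t ht =>
    hD ▸ abs_inner_sub_le_diam_mul_norm hWcomp.isBounded (hw t ht) hu (g t)
  have hregret : ∑ t ∈ S, (f t (w t) - f t u) ≤ ∑ t ∈ S, inner ℝ (w t - u) (g t) :=
    sum_le_sum fun t ht => by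
      have := hsub t (hS ht) u hu
      rw [← neg_sub, inner_neg_left] at this
      linarith
  have hsplit := sum_le_sum_add_sum_sdiff_add_sum_sdiff (topkPassed g k T) S _ _
    (fun t ht => hinner t (filter_subset _ _ (mem_sdiff.1 ht).1))
    (fun t ht => hinner t (hS (mem_sdiff.1 ht).1))
  rw [← mul_sum, ← mul_sum] at hsplit
  have hfilter := two_mul_sqrt_sum_sq_topkPassed_add_le g k T hS
    (by rw [card_sdiff_of_subset hS, card_range]; exact hSk)
  have hsqrt := sqrt_sum_sq_norm_le g T hS
  constructor
  · linarith [hOGD u hu, mul_le_mul_of_nonneg_left hfilter hD0]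
  · linarith [mul_le_mul_of_nonneg_left hsqrt hD0]

/-- Corollary 1, General Convex Losses: if the predictions satisfy the
adaptive OGD guarantee on the rounds passed by the Top-k Filter, then the robust regret
on any `S` with at most `k` outliers is at most
`2D √(Σ_{t∈S} ‖g t‖²) + 2D G(S)(2k + √k + 2) ≤ 2D G(S)(√T + 2k + √k + 2)`. -/
theorem topk_filter_general_convex
    {d : ℕ} (W : Set (EuclideanSpace ℝ (Fin d)))
    (hWne : W.Nonempty) (hWcomp : IsCompact W) (hWconv : Convex ℝ W)
    (D : ℝ) (hD : D = Metric.diam W)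
    (T k : ℕ) (hT : 1 ≤ T)
    (f : ℕ → EuclideanSpace ℝ (Fin d) → ℝ)
    (hconv : ∀ t ∈ Finset.range T, ConvexOn ℝ W (f t))
    (w : ℕ → EuclideanSpace ℝ (Fin d)) (hw : ∀ t ∈ Finset.range T, w t ∈ W)
    (g : ℕ → EuclideanSpace ℝ (Fin d))
    (hsub : ∀ t ∈ Finset.range T, ∀ y ∈ W, f t (w t) + (inner ℝ (y - w t) (g t) : ℝ) ≤ f t y)
    (hOGD : ∀ u ∈ W, ∑ t ∈ topkPassed g k T, (inner ℝ (w t - u) (g t) : ℝ) ≤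
      2 * D * Real.sqrt (∑ t ∈ topkPassed g k T, ‖g t‖ ^ 2))
    (S : Finset ℕ) (hS : S ⊆ Finset.range T) (hSk : T - S.card ≤ k)
    (u : EuclideanSpace ℝ (Fin d)) (hu : u ∈ W) :
    ∑ t ∈ S, (f t (w t) - f t u) ≤
        2 * D * Real.sqrt (∑ t ∈ S, ‖g t‖ ^ 2)
          + 2 * D * gradMax g S * (2 * k + Real.sqrt k + 2) ∧
      2 * D * Real.sqrt (∑ t ∈ S, ‖g t‖ ^ 2)
          + 2 * D * gradMax g S * (2 * k + Real.sqrt k + 2) ≤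
        2 * D * gradMax g S * (Real.sqrt T + 2 * k + Real.sqrt k + 2) :=
  topk_filter_general_convex_general W hWcomp D hD T k f w hw g hsub hOGD S hS hSk u hu
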